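/- arXiv:2011.14251 — 6 statements merged into one kernel-verified Lean document; each statement's English description precedes it below -/
import Mathlib

section
/- Let T and T̂ be linear maps from ℝ^k to ℝ^d with T injective (full column rank), and let q, p, q̂, p̂ ∈ ℝ^d. Suppose θ ∈ ℝ^k satisfies Tθ = q - p, and θ̂ ∈ ℝ^k satisfies T̂θ̂ = q̂ - p̂. If ‖q - q̂‖ ≤ Δ_q, ‖p - p̂‖ ≤ Δ_p, ‖T - T̂‖ ≤ Δ_T, ‖θ‖ ≤ θ_max, and Δ_T ≤ 1/(2‖T†‖) where ‖T†‖ = 1/σ_min(T), then ‖θ̂ - θ‖ ≤ 2‖T†‖(Δ_q + Δ_p + θ_max Δ_T). -/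
/-- Direct (inverse) estimator error bound for categorical label spaces. -/
theorem stmt_0 {k d : ℕ}
    (T That : EuclideanSpace ℝ (Fin k) →L[ℝ] EuclideanSpace ℝ (Fin d))
    (q p qh ph : EuclideanSpace ℝ (Fin d))
    (θ θh : EuclideanSpace ℝ (Fin k))
    (σ Δq Δp ΔT θmax : ℝ)
    (hσ : 0 < σ)
    (hsing : ∀ v, σ * ‖v‖ ≤ ‖T v‖)
    (hTθ : T θ = q - p)
    (hThat : That θh = qh - ph)
    (hq : ‖q - qh‖ ≤ Δq)
    (hp : ‖p - ph‖ ≤ Δp)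
    (hT : ‖T - That‖ ≤ ΔT)
    (hθ : ‖θ‖ ≤ θmax)
    (hΔT : ΔT ≤ 1 / (2 * (1 / σ))) :
    ‖θh - θ‖ ≤ 2 * (1 / σ) * (Δq + Δp + θmax * ΔT) := by
  have h1 : σ * ‖θh - θ‖ ≤ ‖T (θh - θ)‖ := hsing _
  have hTe : T (θh - θ) = (T - That) θh - ((q - qh) - (p - ph)) := by
    simp only [ContinuousLinearMap.sub_apply, map_sub, hTθ, hThat]
    abel
  have h2 : ‖T (θh - θ)‖ ≤ ΔT * ‖θh‖ + (Δq + Δp) := by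
    rw [hTe]
    calc ‖(T - That) θh - ((q - qh) - (p - ph))‖
        ≤ ‖(T - That) θh‖ + ‖(q - qh) - (p - ph)‖ := norm_sub_le _ _
      _ ≤ ‖T - That‖ * ‖θh‖ + (‖q - qh‖ + ‖p - ph‖) :=
          add_le_add ((T - That).le_opNorm θh) (norm_sub_le _ _)
      _ ≤ ΔT * ‖θh‖ + (Δq + Δp) := by gcongr
  have h3 : ‖θh‖ ≤ θmax + ‖θh - θ‖ := by
    calc ‖θh‖ = ‖θ + (θh - θ)‖ := by congr 1; abel
      _ ≤ ‖θ‖ + ‖θh - θ‖ := norm_add_le _ _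
      _ ≤ θmax + ‖θh - θ‖ := by gcongr
  have hΔT0 : 0 ≤ ΔT := (norm_nonneg _).trans hT
  have he0 : 0 ≤ ‖θh - θ‖ := norm_nonneg _
  have hΔT' : 2 * ΔT ≤ σ := by
    rw [show 1 / (2 * (1/σ)) = σ / 2 by field_simp] at hΔT
    linarith
  rw [show (2:ℝ) * (1/σ) * (Δq + Δp + θmax * ΔT) = 2 * (Δq + Δp + θmax * ΔT) / σ by ring,
    le_div_iff₀ hσ]
  nlinarith [mul_le_mul_of_nonneg_left h3 hΔT0]
end

section
/- Let T, T̂ : ℝ^k → ℝ^d be linear maps and q, p, q̂, p̂ ∈ ℝ^d with ‖T - T̂‖ ≤ Δ_T, ‖q - q̂‖ ≤ Δ_q, ‖p - p̂‖ ≤ Δ_p. Suppose θ ∈ ℝ^k satisfies Tθ = q - p, and θ̂ is any minimizer over θ' of the objective J(θ') := ‖T̂θ' - q̂ + p̂‖ + Δ_T‖θ'‖. Then ‖T(θ̂ - θ)‖ ≤ 2Δ_T‖θ‖ + 2(Δ_p + Δ_q). -/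
/-- Regularized estimator: bound on the forward error `‖T(θ̂ - θ)‖`. -/
theorem stmt_2 {k d : ℕ}
    (T That : EuclideanSpace ℝ (Fin k) →L[ℝ] EuclideanSpace ℝ (Fin d))
    (q p qh ph : EuclideanSpace ℝ (Fin d))
    (θ θh : EuclideanSpace ℝ (Fin k))
    (Δq Δp ΔT : ℝ)
    (hT : ‖T - That‖ ≤ ΔT)
    (hq : ‖q - qh‖ ≤ Δq)
    (hp : ‖p - ph‖ ≤ Δp)
    (hTθ : T θ = q - p)
    (hmin : ∀ θ' : EuclideanSpace ℝ (Fin k),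
      ‖That θh - qh + ph‖ + ΔT * ‖θh‖ ≤ ‖That θ' - qh + ph‖ + ΔT * ‖θ'‖) :
    ‖T (θh - θ)‖ ≤ 2 * ΔT * ‖θ‖ + 2 * (Δp + Δq) := by
  have h1 : ∀ x, ‖(T - That) x‖ ≤ ΔT * ‖x‖ := fun x =>
    le_trans ((T - That).le_opNorm x) (mul_le_mul_of_nonneg_right hT (norm_nonneg x))
  have key := hmin θ
  have h2 : ‖That θ - qh + ph‖ ≤ Δq + Δp + ΔT * ‖θ‖ := by
    have e : That θ - qh + ph = (q - qh) - (p - ph) - (T - That) θ := by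
      have : (T - That) θ = T θ - That θ := rfl
      rw [this, hTθ]; abel
    calc ‖That θ - qh + ph‖ = ‖(q - qh) - (p - ph) - (T - That) θ‖ := by rw [e]
    _ ≤ ‖(q - qh) - (p - ph)‖ + ‖(T - That) θ‖ := norm_sub_le _ _
    _ ≤ (‖q - qh‖ + ‖p - ph‖) + ΔT * ‖θ‖ := add_le_add (norm_sub_le _ _) (h1 θ)
    _ ≤ Δq + Δp + ΔT * ‖θ‖ := by linarith
  have e2 : T (θh - θ) = (T - That) θh + (That θh - qh + ph) + ((qh - q) + (p - ph)) := by
    have h3 : (T - That) θh = T θh - That θh := rfl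
    have h4 : T (θh - θ) = T θh - T θ := map_sub T θh θ
    rw [h4, h3, hTθ]; abel
  have h5 : ‖T (θh - θ)‖ ≤ ΔT * ‖θh‖ + ‖That θh - qh + ph‖ + (Δq + Δp) := by
    calc ‖T (θh - θ)‖ = ‖(T - That) θh + (That θh - qh + ph) + ((qh - q) + (p - ph))‖ := by
          rw [e2]
    _ ≤ ‖(T - That) θh + (That θh - qh + ph)‖ + ‖(qh - q) + (p - ph)‖ := norm_add_le _ _
    _ ≤ (‖(T - That) θh‖ + ‖That θh - qh + ph‖) + (‖qh - q‖ + ‖p - ph‖) :=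
          add_le_add (norm_add_le _ _) (norm_add_le _ _)
    _ ≤ ΔT * ‖θh‖ + ‖That θh - qh + ph‖ + (Δq + Δp) := by
          rw [norm_sub_rev qh q] at *; linarith [h1 θh]
  linarith
end

section
/- Under the hypotheses of the previous setup, if additionally T is injective with ‖T†‖ = 1/σ_min(T) and ‖θ‖ ≤ θ_max, then the regularized minimizer θ̂ of ‖T̂θ' - q̂ + p̂‖ + Δ_T‖θ'‖ satisfies ‖θ̂ - θ‖ ≤ 2‖T†‖(Δ_q + Δ_p + θ_max Δ_T). -/
/-- Regularized estimator: bound on the estimation error `‖θ̂ - θ‖` when `T` is injective. -/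
theorem stmt_3 {k d : ℕ}
    (T That : EuclideanSpace ℝ (Fin k) →L[ℝ] EuclideanSpace ℝ (Fin d))
    (q p qh ph : EuclideanSpace ℝ (Fin d))
    (θ θh : EuclideanSpace ℝ (Fin k))
    (σ Δq Δp ΔT θmax : ℝ)
    (hσ : 0 < σ)
    (hsing : ∀ v, σ * ‖v‖ ≤ ‖T v‖)
    (hT : ‖T - That‖ ≤ ΔT)
    (hq : ‖q - qh‖ ≤ Δq)
    (hp : ‖p - ph‖ ≤ Δp)
    (hTθ : T θ = q - p)
    (hθ : ‖θ‖ ≤ θmax)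
    (hmin : ∀ θ' : EuclideanSpace ℝ (Fin k),
      ‖That θh - qh + ph‖ + ΔT * ‖θh‖ ≤ ‖That θ' - qh + ph‖ + ΔT * ‖θ'‖) :
    ‖θh - θ‖ ≤ 2 * (1 / σ) * (Δq + Δp + θmax * ΔT) := by
  have hθmax : (0:ℝ) ≤ θmax := le_trans (norm_nonneg θ) hθ
  have hΔT : (0:ℝ) ≤ ΔT := le_trans (norm_nonneg _) hT
  -- bound ‖(T - That) v‖ ≤ ΔT * ‖v‖
  have hop : ∀ v : EuclideanSpace ℝ (Fin k), ‖(T - That) v‖ ≤ ΔT * ‖v‖ := fun v =>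
    le_trans ((T - That).le_opNorm v) (by
      exact mul_le_mul_of_nonneg_right hT (norm_nonneg v))
  -- bound ‖That θ - qh + ph‖
  have hb1 : ‖That θ - qh + ph‖ ≤ ΔT * θmax + Δq + Δp := by
    have hdec : That θ - qh + ph = -((T - That) θ) + (q - qh) + -(p - ph) := by
      have : (T - That) θ = T θ - That θ := by simp
      rw [this, hTθ]; abel
    calc ‖That θ - qh + ph‖ = ‖-((T - That) θ) + (q - qh) + -(p - ph)‖ := by rw [hdec]
      _ ≤ ‖-((T - That) θ) + (q - qh)‖ + ‖-(p - ph)‖ := norm_add_le _ _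
      _ ≤ ‖-((T - That) θ)‖ + ‖q - qh‖ + ‖-(p - ph)‖ := by
          gcongr; exact norm_add_le _ _
      _ = ‖(T - That) θ‖ + ‖q - qh‖ + ‖p - ph‖ := by rw [norm_neg, norm_neg]
      _ ≤ ΔT * ‖θ‖ + Δq + Δp := by
          gcongr; exact hop θ
      _ ≤ ΔT * θmax + Δq + Δp := by gcongr
  -- minimality
  have hm := hmin θ
  -- main decomposition
  have hdec2 : T θh - (q - p) =
      (T - That) θh + (That θh - qh + ph) + (qh - q) + (p - ph) := by
    have : (T - That) θh = T θh - That θh := by simp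
    rw [this]; abel
  have hb2 : ‖T θh - (q - p)‖ ≤ ΔT * ‖θh‖ + ‖That θh - qh + ph‖ + Δq + Δp := by
    calc ‖T θh - (q - p)‖
        = ‖(T - That) θh + (That θh - qh + ph) + (qh - q) + (p - ph)‖ := by rw [hdec2]
      _ ≤ ‖(T - That) θh + (That θh - qh + ph) + (qh - q)‖ + ‖p - ph‖ := norm_add_le _ _
      _ ≤ ‖(T - That) θh + (That θh - qh + ph)‖ + ‖qh - q‖ + ‖p - ph‖ := by
          gcongr; exact norm_add_le _ _
      _ ≤ ‖(T - That) θh‖ + ‖That θh - qh + ph‖ + ‖qh - q‖ + ‖p - ph‖ := by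
          gcongr; exact norm_add_le _ _
      _ ≤ ΔT * ‖θh‖ + ‖That θh - qh + ph‖ + Δq + Δp := by
          gcongr <;> first | exact hop θh | (rw [norm_sub_rev]; exact hq)
  have hkey : σ * ‖θh - θ‖ ≤ 2 * (Δq + Δp + θmax * ΔT) := by
    have h1 : σ * ‖θh - θ‖ ≤ ‖T (θh - θ)‖ := hsing _
    have h2 : T (θh - θ) = T θh - (q - p) := by rw [map_sub, hTθ]
    calc σ * ‖θh - θ‖ ≤ ‖T θh - (q - p)‖ := by rw [← h2]; exact h1
      _ ≤ ΔT * ‖θh‖ + ‖That θh - qh + ph‖ + Δq + Δp := hb2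
      _ = (‖That θh - qh + ph‖ + ΔT * ‖θh‖) + Δq + Δp := by ring
      _ ≤ (‖That θ - qh + ph‖ + ΔT * ‖θ‖) + Δq + Δp := by gcongr
      _ ≤ ((ΔT * θmax + Δq + Δp) + ΔT * θmax) + Δq + Δp := by gcongr
      _ = 2 * (Δq + Δp + θmax * ΔT) := by ring
  rw [mul_comm σ _] at hkey
  have := (le_div_iff₀ hσ).mpr hkey
  calc ‖θh - θ‖ ≤ 2 * (Δq + Δp + θmax * ΔT) / σ := this
    _ = 2 * (1 / σ) * (Δq + Δp + θmax * ΔT) := by ring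
end

section
/- Let H be a Hilbert space, T, T̂ : H → H bounded linear, q, p, q̂, p̂ ∈ H with ‖T - T̂‖ ≤ Δ_T, ‖q - q̂‖ ≤ Δ_q, ‖p - p̂‖ ≤ Δ_p, and let λ > 0. If θ̂_λ minimizes θ' ↦ ‖T̂θ' - q̂ + p̂‖ + λ‖θ'‖ over H (the infimum is attained), then ‖Tθ̂_λ - q + p‖ ≤ max{1, Δ_T/λ} · inf_{θ'} ( ‖Tθ' - q + p‖ + (Δ_T + λ)‖θ'‖ ) + max{2, 1 + Δ_T/λ} · (Δ_q + Δ_p). -/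
/-- Bound for the `λ`-regularized minimizer. -/
theorem stmt_5 {H : Type*} [NormedAddCommGroup H] [InnerProductSpace ℝ H]
    [CompleteSpace H]
    (T That : H →L[ℝ] H)
    (q p qh ph : H)
    (Δq Δp ΔT lam : ℝ)
    (hlam : 0 < lam)
    (hT : ‖T - That‖ ≤ ΔT)
    (hq : ‖q - qh‖ ≤ Δq)
    (hp : ‖p - ph‖ ≤ Δp)
    (θlam : H)
    (hmin : ∀ θ' : H,
      ‖That θlam - qh + ph‖ + lam * ‖θlam‖ ≤ ‖That θ' - qh + ph‖ + lam * ‖θ'‖) :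
    ‖T θlam - q + p‖ ≤
      max 1 (ΔT / lam) * (⨅ θ' : H, (‖T θ' - q + p‖ + (ΔT + lam) * ‖θ'‖))
        + max 2 (1 + ΔT / lam) * (Δq + Δp) := by
  have hΔT : 0 ≤ ΔT := le_trans (norm_nonneg _) hT
  have hΔq : 0 ≤ Δq := le_trans (norm_nonneg _) hq
  have hΔp : 0 ≤ Δp := le_trans (norm_nonneg _) hp
  set I := ⨅ θ' : H, (‖T θ' - q + p‖ + (ΔT + lam) * ‖θ'‖) with hIdef
  have hI0 : 0 ≤ I := le_ciInf fun θ' => by positivity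
  have hop : ∀ θ' : H, ‖(T - That) θ'‖ ≤ ΔT * ‖θ'‖ := fun θ' =>
    le_trans ((T - That).le_opNorm θ')
      (mul_le_mul_of_nonneg_right hT (norm_nonneg _))
  have key : ∀ θ' : H, ‖That θ' - qh + ph‖ + lam * ‖θ'‖ ≤
      (‖T θ' - q + p‖ + (ΔT + lam) * ‖θ'‖) + (Δq + Δp) := by
    intro θ'
    have heq : That θ' - qh + ph = (T θ' - q + p) - (T - That) θ' + (q - qh) - (p - ph) := by
      simp only [ContinuousLinearMap.sub_apply]
      abel
    have h1 : ‖That θ' - qh + ph‖ ≤ ‖T θ' - q + p‖ + ‖(T - That) θ'‖ + ‖q - qh‖ + ‖p - ph‖ := by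
      rw [heq]
      calc ‖(T θ' - q + p) - (T - That) θ' + (q - qh) - (p - ph)‖
          ≤ ‖(T θ' - q + p) - (T - That) θ' + (q - qh)‖ + ‖p - ph‖ := norm_sub_le _ _
        _ ≤ ‖(T θ' - q + p) - (T - That) θ'‖ + ‖q - qh‖ + ‖p - ph‖ := by
            gcongr; exact norm_add_le _ _
        _ ≤ ‖T θ' - q + p‖ + ‖(T - That) θ'‖ + ‖q - qh‖ + ‖p - ph‖ := by
            gcongr; exact norm_sub_le _ _
    have := hop θ'
    nlinarith [norm_nonneg θ']
  have hmain : ‖That θlam - qh + ph‖ + lam * ‖θlam‖ ≤ I + (Δq + Δp) := by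
    have h2 : ‖That θlam - qh + ph‖ + lam * ‖θlam‖ - (Δq + Δp) ≤ I :=
      le_ciInf fun θ' => by linarith [hmin θ', key θ']
    linarith
  have hrev : ‖T θlam - q + p‖ ≤ ‖That θlam - qh + ph‖ + ΔT * ‖θlam‖ + Δq + Δp := by
    have heq : T θlam - q + p = (That θlam - qh + ph) + (T - That) θlam - (q - qh) + (p - ph) := by
      simp only [ContinuousLinearMap.sub_apply]
      abel
    rw [heq]
    calc ‖(That θlam - qh + ph) + (T - That) θlam - (q - qh) + (p - ph)‖
        ≤ ‖(That θlam - qh + ph) + (T - That) θlam - (q - qh)‖ + ‖p - ph‖ := norm_add_le _ _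
      _ ≤ ‖(That θlam - qh + ph) + (T - That) θlam‖ + ‖q - qh‖ + ‖p - ph‖ := by
          gcongr; exact norm_sub_le _ _
      _ ≤ ‖That θlam - qh + ph‖ + ‖(T - That) θlam‖ + ‖q - qh‖ + ‖p - ph‖ := by
          gcongr; exact norm_add_le _ _
      _ ≤ ‖That θlam - qh + ph‖ + ΔT * ‖θlam‖ + Δq + Δp := by
          gcongr; exact hop θlam
  have hs : 0 ≤ ‖θlam‖ := norm_nonneg _
  have hNn : 0 ≤ ‖That θlam - qh + ph‖ := norm_nonneg _
  rcases le_or_gt ΔT lam with hcase | hcase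
  · have h1 : max 1 (ΔT / lam) = 1 := max_eq_left ((div_le_one hlam).2 hcase)
    have h2 : max 2 (1 + ΔT / lam) = 2 := max_eq_left (by
      have : ΔT / lam ≤ 1 := (div_le_one hlam).2 hcase
      linarith)
    rw [h1, h2]
    nlinarith [mul_nonneg (sub_nonneg.2 hcase) hs]
  · have hr : (1:ℝ) ≤ ΔT / lam := (one_le_div hlam).2 hcase.le
    have h1 : max 1 (ΔT / lam) = ΔT / lam := max_eq_right hr
    have h2 : max 2 (1 + ΔT / lam) = 1 + ΔT / lam := max_eq_right (by linarith)
    rw [h1, h2]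
    have hΔeq : ΔT = (ΔT / lam) * lam := by field_simp
    have hls : lam * ‖θlam‖ ≤ I + (Δq + Δp) := by linarith
    have hmul : (ΔT / lam - 1) * (lam * ‖θlam‖) ≤ (ΔT / lam - 1) * (I + (Δq + Δp)) :=
      mul_le_mul_of_nonneg_left hls (by linarith)
    nlinarith
end

section
/- Let H be a Hilbert space, T, T̂ : H → H bounded linear, q, p, q̂, p̂ ∈ H with ‖T - T̂‖ ≤ Δ_T, Δ_T > 0, ‖q - q̂‖ ≤ Δ_q, ‖p - p̂‖ ≤ Δ_p. Suppose θ ∈ H satisfies Tθ = q - p, and θ̂ minimizes θ' ↦ ‖T̂θ' - q̂ + p̂‖ + Δ_T‖θ'‖. Then ‖T(θ̂ - θ)‖ ≤ inf_{θ'}( ‖Tθ' - q + p‖ + 2Δ_T‖θ'‖ ) + 2(Δ_p + Δ_q), and in particular ‖T(θ̂ - θ)‖ ≤ 2Δ_T‖θ‖ + 2(Δ_p + Δ_q). -/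
/-- Regularized estimator guarantees in a Hilbert space. -/
theorem stmt_6 {H : Type*} [NormedAddCommGroup H] [InnerProductSpace ℝ H]
    [CompleteSpace H]
    (T That : H →L[ℝ] H)
    (q p qh ph : H)
    (Δq Δp ΔT : ℝ)
    (hΔT : 0 < ΔT)
    (hT : ‖T - That‖ ≤ ΔT)
    (hq : ‖q - qh‖ ≤ Δq)
    (hp : ‖p - ph‖ ≤ Δp)
    (θ θh : H)
    (hTθ : T θ = q - p)
    (hmin : ∀ θ' : H,
      ‖That θh - qh + ph‖ + ΔT * ‖θh‖ ≤ ‖That θ' - qh + ph‖ + ΔT * ‖θ'‖) :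
    ‖T (θh - θ)‖ ≤ (⨅ θ' : H, (‖T θ' - q + p‖ + 2 * ΔT * ‖θ'‖)) + 2 * (Δp + Δq)
    ∧ ‖T (θh - θ)‖ ≤ 2 * ΔT * ‖θ‖ + 2 * (Δp + Δq) := by
  have hA : ∀ x : H, ‖(T - That) x‖ ≤ ΔT * ‖x‖ := fun x =>
    ((T - That).le_opNorm x).trans (mul_le_mul_of_nonneg_right hT (norm_nonneg x))
  have hA' : ∀ x : H, ‖(That - T) x‖ ≤ ΔT * ‖x‖ := by
    intro x
    have : (That - T) x = -((T - That) x) := by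
      simp [ContinuousLinearMap.sub_apply]
    rw [this, norm_neg]; exact hA x
  have hnorm1 : ‖T (θh - θ)‖ = ‖T θh - q + p‖ := by
    rw [map_sub, hTθ]; congr 1; abel
  have hq' : ‖qh - q‖ ≤ Δq := by rw [norm_sub_rev]; exact hq
  have hp' : ‖ph - p‖ ≤ Δp := by rw [norm_sub_rev]; exact hp
  have h2 : ‖T θh - q + p‖ ≤ ‖That θh - qh + ph‖ + ΔT * ‖θh‖ + (Δq + Δp) := by
    have e : T θh - q + p = That θh - qh + ph + (T - That) θh + (qh - q) + (p - ph) := by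
      simp only [ContinuousLinearMap.sub_apply]; abel
    rw [e]
    have t1 := norm_add_le (That θh - qh + ph + (T - That) θh + (qh - q)) (p - ph)
    have t2 := norm_add_le (That θh - qh + ph + (T - That) θh) (qh - q)
    have t3 := norm_add_le (That θh - qh + ph) ((T - That) θh)
    have := hA θh
    linarith
  have h3 : ∀ θ' : H, ‖That θ' - qh + ph‖ ≤ ‖T θ' - q + p‖ + ΔT * ‖θ'‖ + (Δq + Δp) := by
    intro θ'
    have e : That θ' - qh + ph = T θ' - q + p + (That - T) θ' + (q - qh) + (ph - p) := by
      simp only [ContinuousLinearMap.sub_apply]; abel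
    rw [e]
    have t1 := norm_add_le (T θ' - q + p + (That - T) θ' + (q - qh)) (ph - p)
    have t2 := norm_add_le (T θ' - q + p + (That - T) θ') (q - qh)
    have t3 := norm_add_le (T θ' - q + p) ((That - T) θ')
    have := hA' θ'
    linarith
  have key : ∀ θ' : H, ‖T (θh - θ)‖ ≤ ‖T θ' - q + p‖ + 2 * ΔT * ‖θ'‖ + 2 * (Δp + Δq) := by
    intro θ'
    have hm := hmin θ'
    have h3' := h3 θ'
    rw [hnorm1]
    linarith
  constructor
  · have h4 : ‖T (θh - θ)‖ - 2 * (Δp + Δq) ≤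
        ⨅ θ' : H, (‖T θ' - q + p‖ + 2 * ΔT * ‖θ'‖) :=
      le_ciInf fun θ' => by linarith [key θ']
    linarith
  · have h0 : T θ - q + p = 0 := by rw [hTθ]; abel
    have := key θ
    rw [h0, norm_zero] at this
    linarith
end

section
/- Let H be a Hilbert space, T, T̂ : H → H bounded linear with ‖T - T̂‖ ≤ Δ_T and q, p, q̂, p̂ ∈ H with ‖q - q̂‖ ≤ Δ_q, ‖p - p̂‖ ≤ Δ_p. If θ̂ satisfies ‖T̂θ̂ - q̂ + p̂‖ + Δ_T‖θ̂‖ ≤ inf_{θ'}( ‖T̂θ' - q̂ + p̂‖ + Δ_T‖θ'‖ ) + η for some η ≥ 0 (approximate minimizer), and θ satisfies Tθ = q - p, then ‖T(θ̂ - θ)‖ ≤ 2Δ_T‖θ‖ + 2(Δ_p + Δ_q) + η. -/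
/-- Regularized estimation guarantee for `η`-approximate minimizers. -/
theorem stmt_18 {H : Type*} [NormedAddCommGroup H] [InnerProductSpace ℝ H]
    [CompleteSpace H]
    (T That : H →L[ℝ] H)
    (q p qh ph : H)
    (Δq Δp ΔT η : ℝ)
    (hη : 0 ≤ η)
    (hT : ‖T - That‖ ≤ ΔT)
    (hq : ‖q - qh‖ ≤ Δq)
    (hp : ‖p - ph‖ ≤ Δp)
    (θ θh : H)
    (hTθ : T θ = q - p)
    (hmin : ‖That θh - qh + ph‖ + ΔT * ‖θh‖ ≤
      (⨅ θ' : H, (‖That θ' - qh + ph‖ + ΔT * ‖θ'‖)) + η) :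
    ‖T (θh - θ)‖ ≤ 2 * ΔT * ‖θ‖ + 2 * (Δp + Δq) + η := by
  have hΔT : 0 ≤ ΔT := (norm_nonneg _).trans hT
  have hbd : BddBelow (Set.range fun θ' : H => ‖That θ' - qh + ph‖ + ΔT * ‖θ'‖) := by
    refine ⟨0, ?_⟩
    rintro x ⟨y, rfl⟩
    positivity
  have hinf := ciInf_le hbd θ
  have hA : ‖T θh - That θh‖ ≤ ΔT * ‖θh‖ := by
    have h := (T - That).le_opNorm θh
    rw [ContinuousLinearMap.sub_apply] at h
    exact h.trans (mul_le_mul_of_nonneg_right hT (norm_nonneg _))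
  have hB : ‖That θ - T θ‖ ≤ ΔT * ‖θ‖ := by
    have h := (T - That).le_opNorm θ
    rw [ContinuousLinearMap.sub_apply] at h
    rw [norm_sub_rev]
    exact h.trans (mul_le_mul_of_nonneg_right hT (norm_nonneg _))
  have h1 : ‖That θ - qh + ph‖ ≤ ΔT * ‖θ‖ + (Δq + Δp) := by
    have heq : That θ - qh + ph = (That θ - T θ) + ((q - qh) - (p - ph)) := by
      rw [hTθ]; abel
    rw [heq]
    calc ‖(That θ - T θ) + ((q - qh) - (p - ph))‖
        ≤ ‖That θ - T θ‖ + ‖(q - qh) - (p - ph)‖ := norm_add_le _ _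
      _ ≤ ‖That θ - T θ‖ + (‖q - qh‖ + ‖p - ph‖) := by
          linarith [norm_sub_le (q - qh) (p - ph)]
      _ ≤ ΔT * ‖θ‖ + (Δq + Δp) := by linarith
  have h2 : T (θh - θ) = (T θh - That θh) + (That θh - qh + ph) + ((qh - q) + (p - ph)) := by
    rw [map_sub, hTθ]; abel
  have h3 : ‖T (θh - θ)‖ ≤ ‖T θh - That θh‖ + ‖That θh - qh + ph‖ + (‖q - qh‖ + ‖p - ph‖) := by
    rw [h2]
    calc ‖(T θh - That θh) + (That θh - qh + ph) + ((qh - q) + (p - ph))‖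
        ≤ ‖T θh - That θh‖ + ‖That θh - qh + ph‖ + ‖(qh - q) + (p - ph)‖ :=
          norm_add₃_le
      _ ≤ _ := by
          have := norm_add_le (qh - q) (p - ph)
          rw [norm_sub_rev qh q] at this
          linarith
  linarith
end
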